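/- Let X be a type and n ≥ 1. Every path γ : [0, k] → Symⁿ(X) in the n-fold symmetric product that is a concatenation of elementary moves (each move changes exactly one coordinate of the multiset) lifts to n paths γ₁, …, γₙ in X of length k such that at each time step exactly one γᵢ moves; moreover, there is a permutation σ ∈ Sₙ with γᵢ joining the i-th coordinate of the start point to the σ(i)-th coordinate of the end point. -/

import Mathlib

/-!
An elementary move `x ::ₘ s ⟶ y ::ₘ s` of the multiset of a tuple `f` lifts to the tuple: some
coordinate `i` has `f i = x`, and `Function.update f i y` has multiset `y ::ₘ s`. Lifting the
moves one after another lifts the whole path. The final tuple and `fin` have the same multiset,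
so their fibres over each point have the same cardinality, and gluing bijections between fibres
gives `σ`.
-/

open Finset

theorem Finset.exists_equiv_of_univ_val_map_eq {ι κ X : Type*} [Fintype ι] [Fintype κ]
    {f : ι → X} {g : κ → X} (h : univ.val.map f = univ.val.map g) :
    ∃ e : ι ≃ κ, ∀ i, g (e i) = f i := by
  classical
  have hfiber : ∀ x, Fintype.card {i // f i = x} = Fintype.card {j // g j = x} := by
    intro x
    simpa [Multiset.count_map, Fintype.card_subtype, eq_comm, Finset.card_def] using
      congrArg (Multiset.count x) h
  exact ⟨Equiv.ofFiberEquiv fun x => Fintype.equivOfCardEq (hfiber x), Equiv.ofFiberEquiv_map _⟩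

theorem Finset.cons_univ_val_map_update {ι X : Type*} [Fintype ι] [DecidableEq ι]
    (f : ι → X) (i : ι) (y : X) :
    f i ::ₘ univ.val.map (Function.update f i y) = y ::ₘ univ.val.map f := by
  have hrest : (univ.val.erase i).map (Function.update f i y) = (univ.val.erase i).map f :=
    Multiset.map_congr rfl fun j hj =>
      Function.update_of_ne ((Finset.nodup _).mem_erase_iff.mp hj).1 _ _
  rw [← Multiset.cons_erase (mem_univ i), Multiset.map_cons, Multiset.map_cons,
    Function.update_self, hrest, Multiset.cons_swap]

def Multiset.IsElementaryMove {X : Type*} (a b : Multiset X) : Prop :=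
  ∃ (s : Multiset X) (x y : X), a = x ::ₘ s ∧ b = y ::ₘ s

theorem Multiset.IsElementaryMove.exists_lift_univ_val_map {ι X : Type*} [Fintype ι]
    {f : ι → X} {b : Multiset X} (h : IsElementaryMove (univ.val.map f) b) :
    ∃ f' : ι → X, univ.val.map f' = b ∧ ∃ i, ∀ j ≠ i, f j = f' j := by
  classical
  obtain ⟨s, x, y, hf, rfl⟩ := h
  obtain ⟨i, -, rfl⟩ := Multiset.mem_map.mp (hf ▸ Multiset.mem_cons_self x s)
  refine ⟨Function.update f i y, (Multiset.cons_inj_right (f i)).mp ?_,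
    i, fun j hj => (Function.update_of_ne hj y f).symm⟩
  rw [cons_univ_val_map_update, hf, Multiset.cons_swap]

theorem Fin.exists_lift_chain {A B : Type*} (p : B → A) {R : A → A → Prop} {S : B → B → Prop}
    (hlift : ∀ b a', R (p b) a' → ∃ b', p b' = a' ∧ S b b') :
    ∀ (k : ℕ) (a : Fin (k + 1) → A), (∀ t : Fin k, R (a t.castSucc) (a t.succ)) →
      ∀ b₀, p b₀ = a 0 → ∃ b : Fin (k + 1) → B,
        b 0 = b₀ ∧ (∀ t, p (b t) = a t) ∧ ∀ t : Fin k, S (b t.castSucc) (b t.succ) := by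
  intro k
  induction k with
  | zero =>
    exact fun a _ b₀ h₀ => ⟨fun _ => b₀, rfl, fun t => by rwa [Fin.fin_one_eq_zero t], nofun⟩
  | succ k ih =>
    intro a ha b₀ h₀
    obtain ⟨b₁, hb₁, hS₁⟩ := hlift b₀ (a 1) (h₀ ▸ ha 0)
    obtain ⟨b, hb0, hpb, hSb⟩ := ih (a ∘ Fin.succ) (fun t => ha t.succ) b₁ hb₁
    refine ⟨Fin.cons b₀ b, rfl, Fin.cases h₀ hpb, Fin.cases ?_ fun t => ?_⟩
    · simpa [hb0] using hS₁
    · simpa using hSb t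

theorem stmt_13_general {X : Type*} (n k : ℕ)
    (m : Fin (k + 1) → Multiset X)
    (hmove : ∀ t : Fin k, ∃ (s : Multiset X) (x y : X),
      m t.castSucc = x ::ₘ s ∧ m t.succ = y ::ₘ s)
    (start fin : Fin n → X)
    (h0 : m 0 = (List.ofFn start : Multiset X))
    (hk : m (Fin.last k) = (List.ofFn fin : Multiset X)) :
    ∃ γ : Fin n → Fin (k + 1) → X,
      (∀ t, ((List.ofFn fun i => γ i t : List X) : Multiset X) = m t) ∧
      (∀ t : Fin k, ∃ i : Fin n, ∀ j : Fin n, j ≠ i →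
        γ j t.castSucc = γ j t.succ) ∧
      ∃ σ : Equiv.Perm (Fin n),
        (∀ i, γ i 0 = start i) ∧ (∀ i, γ i (Fin.last k) = fin (σ i)) := by
  obtain ⟨g, hg0, hgm, hgmove⟩ :=
    Fin.exists_lift_chain (fun f : Fin n → X => univ.val.map f) (R := Multiset.IsElementaryMove)
      (fun _ _ h => h.exists_lift_univ_val_map) k m hmove start (by rw [h0, Fin.univ_val_map])
  obtain ⟨σ, hσ⟩ := exists_equiv_of_univ_val_map_eq (f := g (Fin.last k)) (g := fin)
    (by rw [hgm, hk, Fin.univ_val_map])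
  exact ⟨fun i t => g t i, fun t => by rw [← Fin.univ_val_map, hgm], hgmove, σ,
    congrFun hg0, fun i => (hσ i).symm⟩

/-- A path in `Symⁿ(X)` made of elementary moves (each changing one element of the
multiset) lifts to `n` paths in `X`, at each time step all but (at most) one of
which are constant, joining the coordinates of the start point to the coordinates
of the end point up to a permutation `σ`. -/
theorem stmt_13 {X : Type*} (n k : ℕ) (hn : 1 ≤ n)
    (m : Fin (k + 1) → Multiset X)
    (hcard : ∀ t, Multiset.card (m t) = n)
    (hmove : ∀ t : Fin k, ∃ (s : Multiset X) (x y : X),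
      m t.castSucc = x ::ₘ s ∧ m t.succ = y ::ₘ s)
    (start fin : Fin n → X)
    (h0 : m 0 = (List.ofFn start : Multiset X))
    (hk : m (Fin.last k) = (List.ofFn fin : Multiset X)) :
    ∃ γ : Fin n → Fin (k + 1) → X,
      (∀ t, ((List.ofFn fun i => γ i t : List X) : Multiset X) = m t) ∧
      (∀ t : Fin k, ∃ i : Fin n, ∀ j : Fin n, j ≠ i →
        γ j t.castSucc = γ j t.succ) ∧
      ∃ σ : Equiv.Perm (Fin n),
        (∀ i, γ i 0 = start i) ∧ (∀ i, γ i (Fin.last k) = fin (σ i)) :=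
  stmt_13_general n k m hmove start fin h0 hk
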